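/- arXiv:1507.03275 — 8 statements merged into one kernel-verified Lean document; each statement's English description precedes it below -/
import Mathlib

section
/- Let f(x) be a monic polynomial with integer coefficients and let m ≥ 2 be an integer. Then there exist polynomials g(x), r(x) with integer coefficients and integers k > l ≥ 0 such that f(x)·g(x) + m·r(x) = x^k − x^l. -/
/-!
Modulo `m` the quotient `(ℤ/m)[X]/(f)` is a finite ring, since `f` is monic; hence the powers of
the class of `X` repeat, `Xᵏ ≡ Xˡ` for some `l < k`. Lifting this divisibility `f ∣ Xᵏ - Xˡ` in
`(ℤ/m)[X]` back to `ℤ[X]` gives the identity, the error being a multiple of `m`.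
-/

open Polynomial

theorem Monoid.exists_lt_pow_eq_pow {M : Type*} [Monoid M] [Finite M] (x : M) :
    ∃ l k : ℕ, l < k ∧ x ^ k = x ^ l := by
  obtain ⟨a, b, hne, heq⟩ := Finite.exists_ne_map_eq_of_infinite (x ^ · : ℕ → M)
  rcases hne.lt_or_gt with h | h
  · exact ⟨a, b, h, heq.symm⟩
  · exact ⟨b, a, h, heq⟩

theorem Polynomial.Monic.exists_dvd_X_pow_sub_X_pow {R : Type*} [CommRing R] [Finite R]
    {f : R[X]} (hf : f.Monic) : ∃ l k : ℕ, l < k ∧ f ∣ X ^ k - X ^ l := by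
  have := hf.finite_adjoinRoot
  have : Finite (AdjoinRoot f) := Module.finite_of_finite R
  obtain ⟨l, k, hlk, h⟩ := Monoid.exists_lt_pow_eq_pow (AdjoinRoot.root f)
  exact ⟨l, k, hlk, AdjoinRoot.mk_eq_mk.mp (by simpa using h)⟩

theorem Polynomial.C_dvd_iff_map_intCast_eq_zero (n : ℕ) (p : ℤ[X]) :
    C (n : ℤ) ∣ p ↔ p.map (Int.castRingHom (ZMod n)) = 0 := by
  rw [C_dvd_iff_dvd_coeff]
  simp [Polynomial.ext_iff, ZMod.intCast_zmod_eq_zero_iff_dvd]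

theorem Polynomial.exists_mul_add_C_mul_eq_of_map_dvd {n : ℕ} {f p : ℤ[X]}
    (h : f.map (Int.castRingHom (ZMod n)) ∣ p.map (Int.castRingHom (ZMod n))) :
    ∃ g r : ℤ[X], f * g + C (n : ℤ) * r = p := by
  obtain ⟨q, hq⟩ := h
  obtain ⟨g, rfl⟩ := map_surjective _ (ZMod.ringHom_surjective (Int.castRingHom (ZMod n))) q
  obtain ⟨r, hr⟩ := (C_dvd_iff_map_intCast_eq_zero n (p - f * g)).mpr <| by
    rw [Polynomial.map_sub, Polynomial.map_mul, hq, sub_self]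
  exact ⟨g, r, by rw [← hr]; ring⟩

theorem Polynomial.Monic.exists_mul_add_C_mul_eq_X_pow_sub_X_pow {f : ℤ[X]} (hf : f.Monic)
    {n : ℕ} (hn : n ≠ 0) :
    ∃ (g r : ℤ[X]) (k l : ℕ), l < k ∧ f * g + C (n : ℤ) * r = X ^ k - X ^ l := by
  have : NeZero n := ⟨hn⟩
  obtain ⟨l, k, hlk, hdvd⟩ := (hf.map (Int.castRingHom (ZMod n))).exists_dvd_X_pow_sub_X_pow
  obtain ⟨g, r, h⟩ := exists_mul_add_C_mul_eq_of_map_dvd (n := n) (f := f) (p := X ^ k - X ^ l)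
    (by simpa using hdvd)
  exact ⟨g, r, k, l, hlk, h⟩

theorem stmt_0 (f : Polynomial ℤ) (hf : f.Monic) (m : ℤ) (hm : 2 ≤ m) :
    ∃ (g r : Polynomial ℤ) (k l : ℕ), l < k ∧
      f * g + C m * r = X ^ k - X ^ l := by
  obtain ⟨n, rfl⟩ : ∃ n : ℕ, (n : ℤ) = m := ⟨m.toNat, Int.toNat_of_nonneg (by omega)⟩
  exact hf.exists_mul_add_C_mul_eq_X_pow_sub_X_pow (by omega)
end

section
/- Let n ≥ 1 and let z₁, …, zₙ be complex numbers, not necessarily distinct. For each positive integer l let f^l(x) = (x − z₁^l)⋯(x − zₙ^l), and suppose that for each l ≥ 1 and each 0 ≤ j ≤ n there is an integer e_{j,l} whose image in ℂ equals the coefficient of x^{n−j} in f^l(x). Let p be a prime and let 0 ≤ j₀ ≤ n be such that p divides e_{j,1} for every j with j₀ < j ≤ n. Then for every l ≥ 1, p divides e_{j₀,l} if and only if p divides e_{j₀,1}. -/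
/-!
Up to sign, the coefficients of `f^l` are the elementary symmetric functions of the `zᵢ ^ l`.
By the fundamental theorem on symmetric polynomials these are one and the same integer polynomial
in the elementary symmetric functions of the `zᵢ`, i.e. in the `e_{j,1}`, so the same integers
describe the roots `wᵢ` of `f^1` reduced modulo `p` in an algebraic closure of `𝔽_p`. There the
`e_{j,1}` with `j > j₀` vanish, so at most `j₀` of the `wᵢ` are nonzero; then the `j₀`-th
elementary symmetric function of the `wᵢ`, and of the `wᵢ ^ l`, is either zero for both or the
product of the nonzero `wᵢ` (resp. its `l`-th power) for both.
-/

open Polynomial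

universe u

namespace Multiset

variable {R : Type*} [CommSemiring R]

theorem esymm_zero (s : Multiset R) : s.esymm 0 = 1 := by
  simp [esymm, powersetCard_zero_left]

theorem esymm_cons_succ (a : R) (s : Multiset R) (k : ℕ) :
    (a ::ₘ s).esymm (k + 1) = s.esymm (k + 1) + a * s.esymm k := by
  simp [esymm, powersetCard_cons, sum_map_mul_left]

theorem esymm_eq_zero_of_card_lt {s : Multiset R} {k : ℕ} (h : card s < k) : s.esymm k = 0 := by
  simp [esymm, powersetCard_eq_empty _ h]

theorem esymm_card (s : Multiset R) : s.esymm (card s) = s.prod := by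
  simp [esymm, powersetCard_self]

theorem esymm_filter_ne_zero [DecidableEq R] (s : Multiset R) (k : ℕ) :
    (s.filter (· ≠ 0)).esymm k = s.esymm k := by
  induction s using Multiset.induction_on generalizing k with
  | empty => rfl
  | cons a s ih =>
    rcases k with _ | k
    · simp only [esymm_zero]
    by_cases ha : a = 0
    · rw [filter_cons_of_neg (p := (· ≠ 0)) s (not_not.2 ha), ih, esymm_cons_succ, ha, zero_mul,
        add_zero]
    · rw [filter_cons_of_pos (p := (· ≠ 0)) s ha, esymm_cons_succ, esymm_cons_succ, ih, ih]

variable [NoZeroDivisors R] [Nontrivial R]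

theorem esymm_card_filter_ne_zero_ne_zero [DecidableEq R] (s : Multiset R) :
    s.esymm (card (s.filter (· ≠ 0))) ≠ 0 := by
  rw [← esymm_filter_ne_zero, esymm_card]
  exact prod_ne_zero fun h => (of_mem_filter h) rfl

theorem card_filter_ne_zero_le_of_esymm_eq_zero [DecidableEq R] {s : Multiset R} {j : ℕ}
    (h : ∀ k, j < k → k ≤ card s → s.esymm k = 0) : card (s.filter (· ≠ 0)) ≤ j := by
  by_contra! hj
  exact s.esymm_card_filter_ne_zero_ne_zero (h _ hj (card_le_card (filter_le _ s)))

theorem esymm_eq_zero_iff_card_filter_ne_zero_lt [DecidableEq R] {s : Multiset R} {j : ℕ}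
    (h : card (s.filter (· ≠ 0)) ≤ j) : s.esymm j = 0 ↔ card (s.filter (· ≠ 0)) < j := by
  rcases h.lt_or_eq with hlt | rfl
  · simp only [hlt, ← esymm_filter_ne_zero s j, esymm_eq_zero_of_card_lt hlt]
  · simp [esymm_card_filter_ne_zero_ne_zero]

theorem esymm_map_pow_eq_zero_iff {s : Multiset R} {l j : ℕ} (hl : l ≠ 0)
    (h : ∀ k, j < k → k ≤ card s → s.esymm k = 0) :
    (s.map (· ^ l)).esymm j = 0 ↔ s.esymm j = 0 := by
  classical
  have hcard : card ((s.map (· ^ l)).filter (· ≠ 0)) = card (s.filter (· ≠ 0)) := by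
    simp [filter_map, pow_eq_zero_iff hl]
  have hle := card_filter_ne_zero_le_of_esymm_eq_zero h
  rw [esymm_eq_zero_iff_card_filter_ne_zero_lt hle,
    esymm_eq_zero_iff_card_filter_ne_zero_lt (hcard ▸ hle), hcard]

end Multiset

theorem Finset.coeff_prod_X_sub_C_card_sub {ι R : Type*} [CommRing R] (s : Finset ι)
    (v : ι → R) {j : ℕ} (hj : j ≤ s.card) :
    (∏ i ∈ s, (X - C (v i))).coeff (s.card - j) = (-1) ^ j * (s.val.map v).esymm j := by
  have h := (s.val.map v).prod_X_sub_C_coeff (k := s.card - j) (by simp)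
  rwa [Multiset.map_map, Multiset.card_map, Finset.card_val, Nat.sub_sub_self hj] at h

theorem IsAlgClosed.exists_multiset_esymm_eq {K : Type*} [Field K] [IsAlgClosed K] (n : ℕ)
    (c : ℕ → K) (hc : c 0 = 1) :
    ∃ t : Multiset K, Multiset.card t = n ∧ ∀ k ≤ n, t.esymm k = c k := by
  set g : K[X] := ∑ k ∈ Finset.range (n + 1), monomial (n - k) ((-1) ^ k * c k) with hg
  have hcoeff : ∀ k ≤ n, g.coeff (n - k) = (-1) ^ k * c k := by
    intro k hk
    rw [hg, finsetSum_coeff, Finset.sum_eq_single_of_mem k (by simp; omega)]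
    · rw [coeff_monomial, if_pos rfl]
    · intro i hi hik
      rw [coeff_monomial, if_neg (by simp at hi; omega)]
  have hdeg_le : g.natDegree ≤ n := natDegree_sum_le_of_forall_le _ _ fun k _ =>
    (natDegree_monomial_le _).trans (Nat.sub_le n k)
  have hlead : g.coeff n = 1 := by simpa [hc] using hcoeff 0 (Nat.zero_le n)
  have hmonic : g.Monic := monic_of_natDegree_le_of_coeff_eq_one n hdeg_le hlead
  have hdeg : g.natDegree = n := natDegree_eq_of_le_of_coeff_ne_zero hdeg_le (by simp [hlead])
  refine ⟨g.roots, by rw [IsAlgClosed.card_roots_eq_natDegree, hdeg], fun k hk => ?_⟩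
  have h := coeff_eq_esymm_roots_of_card (p := g) IsAlgClosed.card_roots_eq_natDegree
    (k := n - k) (by omega)
  rw [hcoeff k hk, hmonic.leadingCoeff, one_mul, hdeg, Nat.sub_sub_self hk] at h
  exact (mul_left_cancel₀ (pow_ne_zero _ (neg_ne_zero.2 one_ne_zero)) h).symm

theorem Multiset.exists_fin_map_eq {A : Type*} {n : ℕ} {s : Multiset A} (hs : card s = n) :
    ∃ v : Fin n → A, Finset.univ.val.map v = s := by
  obtain ⟨L, rfl⟩ := Quot.exists_rep s
  obtain rfl : L.length = n := hs
  exact ⟨L.get, by rw [Fin.univ_val_map, List.ofFn_get]; rfl⟩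

theorem Multiset.exists_esymm_map_pow_eq_aeval (n l j : ℕ) :
    ∃ P : MvPolynomial (Fin n) ℤ, ∀ (A : Type u) [CommRing A] (s : Multiset A), card s = n →
      (s.map (· ^ l)).esymm j = MvPolynomial.aeval (fun i : Fin n => s.esymm (i + 1)) P := by
  have hsymm : (MvPolynomial.expand l (MvPolynomial.esymm (Fin n) ℤ j)).IsSymmetric :=
    fun τ => by rw [MvPolynomial.rename_expand, MvPolynomial.esymm_isSymmetric]
  obtain ⟨P, hP⟩ := MvPolynomial.esymmAlgHom_fin_surjective ℤ le_rfl ⟨_, hsymm⟩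
  replace hP := congrArg Subtype.val hP
  rw [MvPolynomial.esymmAlgHom_apply] at hP
  refine ⟨P, fun A _ s hs => ?_⟩
  obtain ⟨v, rfl⟩ := exists_fin_map_eq hs
  have := congrArg (MvPolynomial.aeval v) hP
  rw [MvPolynomial.comp_aeval_apply, MvPolynomial.aeval_expand] at this
  simp only [MvPolynomial.aeval_esymm_eq_multiset_esymm] at this
  rw [map_map, this]
  rfl

theorem Multiset.exists_intCast_eq_esymm_map_pow (n l j : ℕ) (m : ℕ → ℤ) :
    ∃ N : ℤ, ∀ (A : Type u) [CommRing A] (s : Multiset A), card s = n →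
      (∀ k, 1 ≤ k → k ≤ n → s.esymm k = m k) → (s.map (· ^ l)).esymm j = N := by
  obtain ⟨P, hP⟩ := exists_esymm_map_pow_eq_aeval.{u} n l j
  refine ⟨MvPolynomial.eval (fun i : Fin n => m (i + 1)) P, fun A _ s hs hm => ?_⟩
  rw [hP A s hs, funext fun i : Fin n => hm (i + 1) (Nat.le_add_left 1 i) i.isLt]
  simpa using (MvPolynomial.comp_aeval_apply _ (Int.castRingHom A).toIntAlgHom P).symm

theorem stmt_4_general {n : ℕ} (z : Fin n → ℂ) (e : ℕ → ℕ → ℤ)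
    (he : ∀ l : ℕ, 1 ≤ l → ∀ j : ℕ, j ≤ n →
      ((e j l : ℂ)) = (∏ i, (X - C (z i ^ l))).coeff (n - j))
    (p : ℕ) (hp : p.Prime) (j₀ : ℕ) (hj₀ : j₀ ≤ n)
    (hdiv : ∀ j : ℕ, j₀ < j → j ≤ n → (p : ℤ) ∣ e j 1) :
    ∀ l : ℕ, 1 ≤ l → ((p : ℤ) ∣ e j₀ l ↔ (p : ℤ) ∣ e j₀ 1) := by
  intro l hl
  have : Fact p.Prime := ⟨hp⟩
  set K := AlgebraicClosure (ZMod p)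
  set s := Finset.univ.val.map z
  have hs : Multiset.card s = n := by simp [s]
  have hcoeff :
      ∀ l, 1 ≤ l → ∀ j ≤ n, (e j l : ℂ) = (-1) ^ j * (s.map (· ^ l)).esymm j := by
    intro l hl j hj
    rw [he l hl j hj, Multiset.map_map]
    simpa using Finset.univ.coeff_prod_X_sub_C_card_sub (fun i => z i ^ l) (by simpa using hj)
  set m : ℕ → ℤ := fun k => (-1) ^ k * e k 1
  have hs_esymm : ∀ k ≤ n, s.esymm k = m k := by
    intro k hk
    simp [m, hcoeff 1 le_rfl k hk, ← mul_assoc, ← mul_pow]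
  have hm0 : m 0 = 1 := by exact_mod_cast (hs_esymm 0 n.zero_le).symm.trans s.esymm_zero
  obtain ⟨t, ht, ht_esymm⟩ :=
    IsAlgClosed.exists_multiset_esymm_eq (K := K) n (fun k => m k) (by simp [hm0])
  obtain ⟨N, hN⟩ := Multiset.exists_intCast_eq_esymm_map_pow n l j₀ m
  have heN : e j₀ l = (-1) ^ j₀ * N := by
    apply Int.cast_injective (α := ℂ)
    push_cast
    rw [hcoeff l hl j₀ hj₀, hN ℂ s hs fun k _ hk => hs_esymm k hk]
  have ht_vanish : ∀ k, j₀ < k → k ≤ Multiset.card t → t.esymm k = 0 := by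
    intro k hjk hk
    rw [ht_esymm k (ht ▸ hk), CharP.intCast_eq_zero_iff K p]
    exact (hdiv k hjk (ht ▸ hk)).mul_left _
  have hsign : ∀ k (a : ℤ), (p : ℤ) ∣ (-1) ^ k * a ↔ (p : ℤ) ∣ a :=
    fun k _ => (isUnit_neg_one.pow k).dvd_mul_left
  calc (p : ℤ) ∣ e j₀ l ↔ ((N : ℤ) : K) = 0 := by
        rw [heN, hsign, CharP.intCast_eq_zero_iff K p]
    _ ↔ (t.map (· ^ l)).esymm j₀ = 0 := by rw [hN K t ht fun k _ hk => ht_esymm k hk]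
    _ ↔ t.esymm j₀ = 0 := Multiset.esymm_map_pow_eq_zero_iff (by omega) ht_vanish
    _ ↔ (p : ℤ) ∣ e j₀ 1 := by
        rw [ht_esymm j₀ hj₀, CharP.intCast_eq_zero_iff K p, hsign]

theorem stmt_4 {n : ℕ} (hn : 1 ≤ n) (z : Fin n → ℂ) (e : ℕ → ℕ → ℤ)
    (he : ∀ l : ℕ, 1 ≤ l → ∀ j : ℕ, j ≤ n →
      ((e j l : ℂ)) = (∏ i, (X - C (z i ^ l))).coeff (n - j))
    (p : ℕ) (hp : p.Prime) (j₀ : ℕ) (hj₀ : j₀ ≤ n)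
    (hdiv : ∀ j : ℕ, j₀ < j → j ≤ n → (p : ℤ) ∣ e j 1) :
    ∀ l : ℕ, 1 ≤ l → ((p : ℤ) ∣ e j₀ l ↔ (p : ℤ) ∣ e j₀ 1) :=
  stmt_4_general z e he p hp j₀ hj₀ hdiv
end

section
/- Let A be a k×k primitive integer matrix, let λ be its Perron–Frobenius eigenvalue (so λ is a real eigenvalue of A and every complex eigenvalue μ ≠ λ of A satisfies |μ| < λ), let n be the degree of the minimal polynomial of λ over ℚ, and let w ∈ ℝ^k be a left λ-eigenvector of A all of whose entries are strictly positive (w·A = λ·w, where A acts via its real entries). Then there is a ℤ-submodule F of ℤ^k, of rank n, such that F is invariant under A (i.e., A·x ∈ F for all x ∈ F), the quotient group ℤ^k/F is free abelian, and the homomorphism ℤ^k → ℝ given by x ↦ w·x is injective on F. -/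
/-!
Let `K = ℚ(λ)` and let `v ∈ Kᵏ` be a right `λ`-eigenvector of `A`. The `ℚ`-linear map
`Θ : K → ℚᵏ, t ↦ (Tr_{K/ℚ}(vᵢ t))ᵢ` intertwines multiplication by `λ` with `A` and is injective
(its kernel is an ideal of `K`), so its image `V` is an `A`-invariant subspace of dimension `n`,
and `F = V ∩ ℤᵏ` is an `A`-invariant saturated lattice of rank `n`.
Expanding the trace over the embeddings `σ : K → ℂ` gives `w ⬝ Θ(t) = ∑ σ, σ(t) (w ⬝ σ(v))`.
Since `σ(v)` is an eigenvector for `σ(λ) ≠ λ` when `σ` is not the inclusion, only the real term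
`t (w ⬝ v)` survives, and `w ⬝ v ≠ 0` by the Perron–Frobenius argument: a power of `A` is positive.
-/

open Matrix Module Polynomial nonZeroDivisors IntermediateField

section Saturation

variable {R S M N : Type*} [CommRing R] [CommRing S] [Algebra R S] [IsFractionRing R S]
  [AddCommGroup M] [Module R M] [AddCommGroup N] [Module R N] [Module S N] [IsScalarTower R S N]
  (f : M →ₗ[R] N)

theorem Submodule.finrank_comap_restrictScalars [IsLocalizedModule R⁰ f] (V : Submodule S N) :
    finrank R ((V.restrictScalars R).comap f) = finrank S V := by
  set L := (V.restrictScalars R).comap f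
  have hV : L.localized' S R⁰ f = V := (Submodule.localized'gi S R⁰ f).l_u_eq V
  rw [← hV, IsLocalization.finrank_eq S R⁰ le_rfl,
    IsLocalizedModule.finrank_eq R⁰ (L.toLocalized' S R⁰ f) le_rfl]

theorem Submodule.isTorsionFree_quotient_comap_restrictScalars [IsDomain R] (V : Submodule S N) :
    IsTorsionFree R (M ⧸ (V.restrictScalars R).comap f) := by
  refine isTorsionFree_iff_smul_eq_zero.2 fun r m hrm => or_iff_not_imp_left.2 fun hr => ?_
  obtain ⟨m, rfl⟩ := Submodule.Quotient.mk_surjective _ m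
  rw [← Submodule.Quotient.mk_smul, Submodule.Quotient.mk_eq_zero] at hrm
  rw [Submodule.Quotient.mk_eq_zero]
  have hunit : IsUnit (algebraMap R S r) :=
    IsLocalization.map_units S (⟨r, mem_nonZeroDivisors_of_ne_zero hr⟩ : R⁰)
  have : algebraMap R S r • f m ∈ V := by
    rw [algebraMap_smul, ← map_smul]
    exact hrm
  exact (Submodule.smul_mem_iff_of_isUnit V hunit).1 this

variable {ι : Type*}

def Submodule.integerPoints (V : Submodule ℚ (ι → ℚ)) : Submodule ℤ (ι → ℤ) :=
  (V.restrictScalars ℤ).comap (LinearMap.pi fun i => Algebra.linearMap ℤ ℚ ∘ₗ LinearMap.proj i)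

theorem Submodule.mem_integerPoints {V : Submodule ℚ (ι → ℚ)} {x : ι → ℤ} :
    x ∈ V.integerPoints ↔ (fun i => (x i : ℚ)) ∈ V := Iff.rfl

theorem Matrix.mulVec_mem_integerPoints [Fintype ι] {V : Submodule ℚ (ι → ℚ)}
    (A : Matrix ι ι ℤ) (hV : ∀ y ∈ V, A.map (Int.cast : ℤ → ℚ) *ᵥ y ∈ V) {x : ι → ℤ}
    (hx : x ∈ V.integerPoints) : A *ᵥ x ∈ V.integerPoints := by
  rw [Submodule.mem_integerPoints] at hx ⊢
  convert hV _ hx using 1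
  ext i
  simp [mulVec, dotProduct]

theorem Submodule.finrank_integerPoints [Finite ι] (V : Submodule ℚ (ι → ℚ)) :
    finrank ℤ V.integerPoints = finrank ℚ V :=
  finrank_comap_restrictScalars _ V

instance Submodule.free_quotient_integerPoints [Finite ι] (V : Submodule ℚ (ι → ℚ)) :
    Module.Free ℤ ((ι → ℤ) ⧸ V.integerPoints) :=
  have : IsTorsionFree ℤ ((ι → ℤ) ⧸ V.integerPoints) :=
    isTorsionFree_quotient_comap_restrictScalars _ V
  Module.free_of_finite_type_torsion_free'

end Saturation

section Eigenvectors

variable {ι : Type*} [Fintype ι]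

theorem Matrix.aeval_charpoly_eq_zero_iff [DecidableEq ι] {R L : Type*} [CommRing R] [CommRing L]
    [IsDomain L] [Algebra R L] (M : Matrix ι ι R) (μ : L) :
    aeval μ M.charpoly = 0 ↔ ∃ v, v ≠ 0 ∧ M.map (algebraMap R L) *ᵥ v = μ • v := by
  rw [aeval_def, eval₂_eq_eval_map, ← charpoly_map, eval_charpoly, ← exists_mulVec_eq_zero_iff]
  simp only [sub_mulVec, scalar_apply, ← smul_one_eq_diagonal, smul_mulVec, one_mulVec,
    sub_eq_zero, eq_comm]

theorem Matrix.isIntegral_of_mulVec_eq_smul [DecidableEq ι] {R L : Type*} [CommRing R]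
    [CommRing L] [IsDomain L] [Algebra R L] (M : Matrix ι ι R) {μ : L} {u : ι → L} (hu0 : u ≠ 0)
    (hu : M.map (algebraMap R L) *ᵥ u = μ • u) : IsIntegral R μ :=
  ⟨_, charpoly_monic M, (aeval_charpoly_eq_zero_iff M μ).2 ⟨u, hu0, hu⟩⟩

theorem Matrix.exists_mulVec_eq_adjoinSimple_gen_smul [DecidableEq ι] {F E : Type*} [Field F] [Field E]
    [Algebra F E] (M : Matrix ι ι F) {μ : E} {u : ι → E} (hu0 : u ≠ 0)
    (hu : M.map (algebraMap F E) *ᵥ u = μ • u) :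
    ∃ v : ι → F⟮μ⟯, v ≠ 0 ∧ M.map (algebraMap F F⟮μ⟯) *ᵥ v = AdjoinSimple.gen F μ • v := by
  rw [← aeval_charpoly_eq_zero_iff]
  apply (algebraMap F⟮μ⟯ E).injective
  rw [← aeval_algebraMap_apply, AdjoinSimple.algebraMap_gen, map_zero]
  exact (aeval_charpoly_eq_zero_iff M μ).2 ⟨u, hu0, hu⟩

theorem Matrix.dotProduct_eq_zero_of_vecMul_eq_smul_of_mulVec_eq_smul {R : Type*} [CommRing R]
    [IsDomain R] {M : Matrix ι ι R} {w u : ι → R} {a b : R} (hw : w ᵥ* M = a • w)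
    (hu : M *ᵥ u = b • u) (hab : a ≠ b) : w ⬝ᵥ u = 0 := by
  have h : a * (w ⬝ᵥ u) = b * (w ⬝ᵥ u) := by
    rw [← smul_eq_mul, ← smul_dotProduct, ← hw, ← dotProduct_mulVec, hu, dotProduct_smul,
      smul_eq_mul]
  by_contra h0
  exact hab (mul_right_cancel₀ h0 h)

theorem Matrix.pow_mulVec_eq_pow_smul [DecidableEq ι] {R : Type*} [CommSemiring R]
    {M : Matrix ι ι R} {u : ι → R} {a : R} (hu : M *ᵥ u = a • u) (N : ℕ) :
    (M ^ N) *ᵥ u = a ^ N • u := by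
  induction N with
  | zero => simp
  | succ N ih => rw [pow_succ', ← mulVec_mulVec, ih, mulVec_smul, hu, smul_smul, pow_succ]

theorem Matrix.vecMul_pow_eq_pow_smul [DecidableEq ι] {R : Type*} [CommSemiring R]
    {M : Matrix ι ι R} {w : ι → R} {a : R} (hw : w ᵥ* M = a • w) (N : ℕ) :
    w ᵥ* (M ^ N) = a ^ N • w := by
  induction N with
  | zero => simp
  | succ N ih => rw [pow_succ, ← vecMul_vecMul, ih, smul_vecMul, hw, smul_smul, pow_succ]

end Eigenvectors

section PerronFrobenius

theorem Finset.abs_sum_lt_sum_abs {ι : Type*} {s : Finset ι} {a : ι → ℝ} {p q : ι} (hp : p ∈ s)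
    (hq : q ∈ s) (hpos : 0 < a p) (hneg : a q < 0) : |∑ i ∈ s, a i| < ∑ i ∈ s, |a i| := by
  rw [abs_lt, ← Finset.sum_neg_distrib]
  exact ⟨Finset.sum_lt_sum (fun i _ => neg_abs_le (a i)) ⟨p, hp, by rw [abs_of_pos hpos]; linarith⟩,
    Finset.sum_lt_sum (fun i _ => le_abs_self (a i)) ⟨q, hq, by rw [abs_of_neg hneg]; linarith⟩⟩

variable {ι : Type*} [Fintype ι] {w y : ι → ℝ}

theorem Matrix.exists_pos_of_dotProduct_eq_zero (hw0 : ∀ i, 0 < w i) (hwy : w ⬝ᵥ y = 0)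
    (hy0 : y ≠ 0) : ∃ p, 0 < y p := by
  by_contra! h
  refine hy0 (funext fun i => ?_)
  have hterm := (Finset.sum_eq_zero_iff_of_nonpos fun j _ =>
    mul_nonpos_of_nonneg_of_nonpos (hw0 j).le (h j)).1 hwy i (Finset.mem_univ i)
  exact (mul_eq_zero.1 hterm).resolve_left (hw0 i).ne'

theorem Matrix.dotProduct_ne_zero_of_pos {B : Matrix ι ι ℝ} (hB : ∀ i j, 0 < B i j)
    (hw0 : ∀ i, 0 < w i) {μ : ℝ} (hw : w ᵥ* B = μ • w) (hy : B *ᵥ y = μ • y) (hy0 : y ≠ 0) :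
    w ⬝ᵥ y ≠ 0 := by
  intro hwy
  obtain ⟨p, hp⟩ := exists_pos_of_dotProduct_eq_zero hw0 hwy hy0
  obtain ⟨q, hq⟩ := exists_pos_of_dotProduct_eq_zero hw0 (by rw [dotProduct_neg, hwy, neg_zero])
    (neg_ne_zero.2 hy0)
  set z : ι → ℝ := fun i => |y i|
  -- `y` has entries of both signs, so the triangle inequality is strict in every row of `B`.
  have hBz : ∀ i, |μ| * z i < (B *ᵥ z) i := fun i =>
    calc |μ| * z i = |∑ j, B i j * y j| := by
          rw [← abs_mul, ← smul_eq_mul, ← Pi.smul_apply, ← hy]; rfl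
      _ < ∑ j, |B i j * y j| := Finset.abs_sum_lt_sum_abs (Finset.mem_univ p)
          (Finset.mem_univ q) (mul_pos (hB i p) hp) (mul_neg_of_pos_of_neg (hB i q) (neg_pos.1 hq))
      _ = (B *ᵥ z) i := Finset.sum_congr rfl fun j _ => by rw [abs_mul, abs_of_pos (hB i j)]
  have hwz : 0 ≤ w ⬝ᵥ z := Finset.sum_nonneg fun i _ => mul_nonneg (hw0 i).le (abs_nonneg _)
  have hlt := calc |μ| * (w ⬝ᵥ z) = w ⬝ᵥ (|μ| • z) := by rw [dotProduct_smul, smul_eq_mul]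
    _ < w ⬝ᵥ (B *ᵥ z) := Finset.sum_lt_sum_of_nonempty ⟨p, Finset.mem_univ p⟩
          fun i _ => mul_lt_mul_of_pos_left (hBz i) (hw0 i)
    _ = μ * (w ⬝ᵥ z) := by rw [dotProduct_mulVec, hw, smul_dotProduct, smul_eq_mul]
  exact (hlt.trans_le (mul_le_mul_of_nonneg_right (le_abs_self μ) hwz)).false

theorem Matrix.dotProduct_ne_zero_of_pow_pos [DecidableEq ι] {M : Matrix ι ι ℝ} {N : ℕ}
    (hM : ∀ i j, 0 < (M ^ N) i j) (hw0 : ∀ i, 0 < w i) {μ : ℝ} (hw : w ᵥ* M = μ • w)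
    (hy : M *ᵥ y = μ • y) (hy0 : y ≠ 0) : w ⬝ᵥ y ≠ 0 :=
  dotProduct_ne_zero_of_pos hM hw0 (vecMul_pow_eq_pow_smul hw N) (pow_mulVec_eq_pow_smul hy N) hy0

end PerronFrobenius

section TraceVec

variable {F K ι : Type*} [Field F] [Field K] [Algebra F K]

variable (F) in
noncomputable def traceVec (v : ι → K) : K →ₗ[F] ι → F :=
  LinearMap.pi fun i => Algebra.trace F K ∘ₗ LinearMap.mulLeft F (v i)

@[simp]
theorem traceVec_apply (v : ι → K) (t : K) (i : ι) :
    traceVec F v t i = Algebra.trace F K (v i * t) := rfl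

variable [Fintype ι] {A : Matrix ι ι F} {θ : K} {v : ι → K}

theorem mulVec_traceVec (hv : A.map (algebraMap F K) *ᵥ v = θ • v) (t : K) :
    A *ᵥ traceVec F v t = traceVec F v (θ * t) := by
  ext i
  have hi : ∑ j, algebraMap F K (A i j) * v j = θ * v i := congrFun hv i
  simp only [traceVec_apply, mulVec, dotProduct]
  rw [← mul_assoc, mul_comm (v i), ← hi, Finset.sum_mul, map_sum]
  refine Finset.sum_congr rfl fun j _ => ?_
  rw [mul_assoc, ← Algebra.smul_def, map_smul, smul_eq_mul]

theorem traceVec_injective [FiniteDimensional F K] [Algebra.IsSeparable F K]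
    (hgen : Algebra.adjoin F {θ} = ⊤) (hv : A.map (algebraMap F K) *ᵥ v = θ • v) (hv0 : v ≠ 0) :
    Function.Injective (traceVec F v) := by
  have hideal : ∀ s, ∀ t ∈ LinearMap.ker (traceVec F v), s * t ∈ LinearMap.ker (traceVec F v) := by
    intro s
    induction (hgen ▸ Algebra.mem_top : s ∈ Algebra.adjoin F {θ}) using Algebra.adjoin_induction with
    | mem x hx =>
      intro t ht
      rw [Set.mem_singleton_iff.1 hx, LinearMap.mem_ker, ← mulVec_traceVec hv,
        LinearMap.mem_ker.1 ht, mulVec_zero]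
    | algebraMap r => intro t ht; rw [← Algebra.smul_def]; exact Submodule.smul_mem _ r ht
    | add x y _ _ hx hy => intro t ht; rw [add_mul]; exact add_mem (hx t ht) (hy t ht)
    | mul x y _ _ hx hy => intro t ht; rw [mul_assoc]; exact hx _ (hy t ht)
  rw [← LinearMap.ker_eq_bot, Submodule.eq_bot_iff]
  by_contra! ⟨t, ht, ht0⟩
  refine hv0 (funext fun i => (traceForm_nondegenerate F K).1 (v i) fun u => ?_)
  rw [Algebra.traceForm_apply]
  simpa [inv_mul_cancel_right₀ ht0] using congrFun (hideal (u * t⁻¹) t ht) i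

theorem mulVec_comp_algHom {L : Type*} [CommRing L] [Algebra F L] (σ : K →ₐ[F] L)
    (hv : A.map (algebraMap F K) *ᵥ v = θ • v) :
    A.map (algebraMap F L) *ᵥ (σ ∘ v) = σ θ • (σ ∘ v) := by
  ext i
  have := RingHom.map_mulVec (σ : K →+* L) (A.map (algebraMap F K)) v i
  rw [hv] at this
  simpa [Matrix.map_map, Function.comp_def] using this.symm

variable {E : Type*} [Field E] [IsAlgClosed E] [Algebra F E] [FiniteDimensional F K]
  [Algebra.IsSeparable F K]

theorem dotProduct_traceVec (w : ι → E) (t : K) :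
    w ⬝ᵥ (algebraMap F E ∘ traceVec F v t) = ∑ σ : K →ₐ[F] E, σ t * (w ⬝ᵥ (σ ∘ v)) := by
  simp only [dotProduct, Function.comp_apply, traceVec_apply, trace_eq_sum_embeddings,
    Finset.mul_sum, map_mul]
  rw [Finset.sum_comm]
  exact Finset.sum_congr rfl fun σ _ => Finset.sum_congr rfl fun i _ => by ring

theorem dotProduct_traceVec_eq_mul (hgen : Algebra.adjoin F {θ} = ⊤)
    (hv : A.map (algebraMap F K) *ᵥ v = θ • v) (σ₀ : K →ₐ[F] E) {w : ι → E}
    (hw : w ᵥ* A.map (algebraMap F E) = σ₀ θ • w) (t : K) :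
    w ⬝ᵥ (algebraMap F E ∘ traceVec F v t) = σ₀ t * (w ⬝ᵥ (σ₀ ∘ v)) := by
  rw [dotProduct_traceVec, Finset.sum_eq_single σ₀ _ (by simp)]
  intro σ _ hσ
  have hθ : σ₀ θ ≠ σ θ := fun h =>
    hσ (AlgHom.ext_of_adjoin_eq_top hgen fun x hx => by rw [Set.mem_singleton_iff.1 hx, h])
  rw [dotProduct_eq_zero_of_vecMul_eq_smul_of_mulVec_eq_smul hw (mulVec_comp_algHom σ hv) hθ,
    mul_zero]

end TraceVec

section RealEmbedding

variable {K ι : Type*} [Field K] [Algebra ℚ K] [FiniteDimensional ℚ K] [Fintype ι]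
  {A : Matrix ι ι ℚ} {θ : K} {v : ι → K}

theorem eq_zero_of_dotProduct_traceVec_eq_zero
    (hgen : Algebra.adjoin ℚ {θ} = ⊤) (hv : A.map (algebraMap ℚ K) *ᵥ v = θ • v)
    (τ : K →ₐ[ℚ] ℝ) {w : ι → ℝ} (hw : w ᵥ* A.map (algebraMap ℚ ℝ) = τ θ • w)
    (hwv : w ⬝ᵥ (τ ∘ v) ≠ 0) {t : K} (ht : w ⬝ᵥ (algebraMap ℚ ℝ ∘ traceVec ℚ v t) = 0) :
    t = 0 := by
  let σ₀ : K →ₐ[ℚ] ℂ := (Complex.ofRealAm.restrictScalars ℚ).comp τ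
  have hwℂ : (Complex.ofReal ∘ w) ᵥ* A.map (algebraMap ℚ ℂ) = σ₀ θ • (Complex.ofReal ∘ w) := by
    have hA : A.map (algebraMap ℚ ℂ) = (A.map (algebraMap ℚ ℝ)).map Complex.ofRealHom := by
      ext; simp
    ext j
    rw [hA]
    refine (Complex.ofRealHom.map_vecMul _ w j).symm.trans ?_
    simp [hw, σ₀]
  have key := dotProduct_traceVec_eq_mul hgen hv σ₀ hwℂ t
  have hlhs : (Complex.ofReal ∘ w) ⬝ᵥ (algebraMap ℚ ℂ ∘ traceVec ℚ v t) = 0 := by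
    simpa [dotProduct] using congrArg Complex.ofReal ht
  have hrhs : (Complex.ofReal ∘ w) ⬝ᵥ (σ₀ ∘ v) = ((w ⬝ᵥ (τ ∘ v) : ℝ) : ℂ) := by
    simp [dotProduct, σ₀]
  rw [hlhs, hrhs, eq_comm, mul_eq_zero, map_eq_zero, Complex.ofReal_eq_zero] at key
  exact key.resolve_right hwv

end RealEmbedding

theorem stmt_7_general {k : ℕ} (A : Matrix (Fin k) (Fin k) ℤ)
    (hprim : ∃ N : ℕ, 0 < N ∧ ∀ i j, 0 < (A ^ N) i j)
    (lam : ℝ)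
    (heig : ∃ v : Fin k → ℝ, v ≠ 0 ∧ (A.map (Int.cast : ℤ → ℝ)) *ᵥ v = lam • v)
    (n : ℕ) (hndeg : n = (minpoly ℚ lam).natDegree)
    (w : Fin k → ℝ) (hwpos : ∀ i, 0 < w i)
    (hw : w ᵥ* (A.map (Int.cast : ℤ → ℝ)) = lam • w) :
    ∃ F : Submodule ℤ (Fin k → ℤ),
      (∀ x ∈ F, A *ᵥ x ∈ F) ∧
      Module.finrank ℤ F = n ∧
      Module.Free ℤ ((Fin k → ℤ) ⧸ F) ∧
      (∀ x ∈ F, (∑ i, w i * (x i : ℝ)) = 0 → x = 0) := by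
  obtain ⟨N, -, hN⟩ := hprim
  obtain ⟨u, hu0, hu⟩ := heig
  set Aℚ := A.map (Int.cast : ℤ → ℚ)
  have hAℝ : Aℚ.map (algebraMap ℚ ℝ) = A.map Int.cast := by ext; simp [Aℚ]
  rw [← hAℝ] at hu hw
  have hint : IsIntegral ℚ lam := Aℚ.isIntegral_of_mulVec_eq_smul hu0 hu
  have : FiniteDimensional ℚ ℚ⟮lam⟯ := adjoin.finiteDimensional hint
  have hgen : Algebra.adjoin ℚ {AdjoinSimple.gen ℚ lam} = ⊤ :=
    (adjoin.powerBasis hint).adjoin_gen_eq_top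
  obtain ⟨v, hv0, hv⟩ := Aℚ.exists_mulVec_eq_adjoinSimple_gen_smul hu0 hu
  have hpow : A.map (Int.cast : ℤ → ℝ) ^ N = (A ^ N).map Int.cast :=
    (A.map_pow (Int.castRingHom ℝ) N).symm
  have hAN : ∀ i j, 0 < (Aℚ.map (algebraMap ℚ ℝ) ^ N) i j := fun i j => by
    rw [hAℝ, hpow, map_apply]
    exact_mod_cast hN i j
  have hwv : w ⬝ᵥ (val _ ∘ v) ≠ 0 := dotProduct_ne_zero_of_pow_pos hAN hwpos hw
    (mulVec_comp_algHom (val _) hv) (by simpa [funext_iff] using hv0)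
  refine ⟨(LinearMap.range (traceVec ℚ v)).integerPoints, fun x => A.mulVec_mem_integerPoints ?_,
    ?_, inferInstance, ?_⟩
  · rintro _ ⟨t, rfl⟩
    exact ⟨_, (mulVec_traceVec hv t).symm⟩
  · rw [Submodule.finrank_integerPoints, LinearMap.finrank_range_of_inj
      (traceVec_injective hgen hv hv0), adjoin.finrank hint, hndeg]
  · intro x hxF hx
    obtain ⟨t, ht⟩ := Submodule.mem_integerPoints.1 hxF
    have ht0 := eq_zero_of_dotProduct_traceVec_eq_zero hgen hv (val _) hw hwv
      (by rw [ht]; simpa [dotProduct] using hx)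
    rw [ht0, map_zero] at ht
    ext i
    simpa using (congrFun ht i).symm

theorem stmt_7 {k : ℕ} (A : Matrix (Fin k) (Fin k) ℤ)
    (hprim : ∃ N : ℕ, 0 < N ∧ ∀ i j, 0 < (A ^ N) i j)
    (lam : ℝ)
    (heig : ∃ v : Fin k → ℝ, v ≠ 0 ∧ (A.map (Int.cast : ℤ → ℝ)) *ᵥ v = lam • v)
    (hmax : ∀ μ : ℂ, μ ≠ (lam : ℂ) →
      (∃ u : Fin k → ℂ, u ≠ 0 ∧ (A.map (Int.cast : ℤ → ℂ)) *ᵥ u = μ • u) →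
      ‖μ‖ < lam)
    (n : ℕ) (hndeg : n = (minpoly ℚ lam).natDegree)
    (w : Fin k → ℝ) (hwpos : ∀ i, 0 < w i)
    (hw : w ᵥ* (A.map (Int.cast : ℤ → ℝ)) = lam • w) :
    ∃ F : Submodule ℤ (Fin k → ℤ),
      (∀ x ∈ F, A *ᵥ x ∈ F) ∧
      Module.finrank ℤ F = n ∧
      Module.Free ℤ ((Fin k → ℤ) ⧸ F) ∧
      (∀ x ∈ F, (∑ i, w i * (x i : ℝ)) = 0 → x = 0) :=
  stmt_7_general A hprim lam heig n hndeg w hwpos hw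
end

section
/- Let A be a k×k primitive integer matrix and let λ be its Perron–Frobenius eigenvalue (so λ is a real eigenvalue of A and every complex eigenvalue μ ≠ λ of A satisfies |μ| < λ). Then there exists a nonzero right λ-eigenvector v ∈ ℝ^k of A (A·v = λ·v, where A acts via its real entries) all of whose entries lie in the field ℚ(λ) ⊆ ℝ and whose entries span ℚ(λ) as a vector space over ℚ. The same holds for a left λ-eigenvector. -/
/-!
Since `λ` is a root of the characteristic polynomial of `A`, it is algebraic and the singular
matrix `λ • 1 - A` already has a kernel vector `v` over the field `ℚ(λ)`. The `ℚ`-span of the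
entries of `v` is stable under multiplication by `λ`, because `λ vᵢ = ∑ⱼ Aᵢⱼ vⱼ` with `Aᵢⱼ ∈ ℤ`;
so it is a `ℚ[λ] = ℚ(λ)`-submodule of `ℚ(λ)` containing some `vᵢ ≠ 0`, i.e. all of `ℚ(λ)`.
Left eigenvectors are right eigenvectors of `Aᵀ`, which has the same characteristic polynomial.
-/

open Matrix IntermediateField Polynomial

namespace Matrix

variable {n : Type*} [Fintype n]

theorem exists_mulVec_eq_smul_iff_aeval_charpoly [DecidableEq n] {R L : Type*} [CommRing R]
    [CommRing L] [IsDomain L] [Algebra R L] (A : Matrix n n R) (μ : L) :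
    (∃ v ≠ 0, A.map (algebraMap R L) *ᵥ v = μ • v) ↔ aeval μ A.charpoly = 0 := by
  rw [← eval_map_algebraMap, ← charpoly_map, eval_charpoly, ← exists_mulVec_eq_zero_iff]
  simp only [sub_mulVec, scalar_apply, ← smul_one_eq_diagonal, smul_mulVec, one_mulVec,
    sub_eq_zero, eq_comm]

variable {K L : Type*} [Field K] [Field L] [Algebra K L]

theorem exists_mulVec_eq_smul_of_aeval_charpoly [DecidableEq n] (A : Matrix n n K) {μ : L}
    (hμ : aeval μ A.charpoly = 0) :
    ∃ v ≠ 0, A.map (algebraMap K L) *ᵥ v = μ • v ∧ ∀ i, v i ∈ K⟮μ⟯ := by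
  set μ' : K⟮μ⟯ := ⟨μ, mem_adjoin_simple_self K μ⟩
  have hμ' : aeval μ' A.charpoly = 0 := by
    apply FaithfulSMul.algebraMap_injective K⟮μ⟯ L
    rwa [← aeval_algebraMap_apply, map_zero]
  obtain ⟨u, hu0, hu⟩ := (exists_mulVec_eq_smul_iff_aeval_charpoly A μ').mpr hμ'
  refine ⟨algebraMap K⟮μ⟯ L ∘ u, ?_, ?_, fun i => (u i).2⟩
  · exact (FaithfulSMul.algebraMap_injective K⟮μ⟯ L).comp_left.ne_iff.mpr hu0
  · funext i
    have := congrArg (algebraMap K⟮μ⟯ L) (congrFun hu i)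
    rw [RingHom.map_mulVec, map_map, ← RingHom.coe_comp, ← IsScalarTower.algebraMap_eq] at this
    simpa [μ'] using this

theorem mul_mem_span_range_of_mulVec_eq_smul (A : Matrix n n K) {μ : L} {v : n → L}
    (hv : A.map (algebraMap K L) *ᵥ v = μ • v) {x : L}
    (hx : x ∈ Submodule.span K (Set.range v)) :
    μ * x ∈ Submodule.span K (Set.range v) := by
  suffices Submodule.span K (Set.range v) ≤
      (Submodule.span K (Set.range v)).comap (LinearMap.mulLeft K μ) from this hx
  rw [Submodule.span_le]
  rintro _ ⟨j, rfl⟩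
  have hj : μ * v j = ∑ m, A j m • v m := by
    simpa [mulVec, dotProduct, Algebra.smul_def] using (congrFun hv j).symm
  rw [SetLike.mem_coe, Submodule.mem_comap, LinearMap.mulLeft_apply, hj]
  exact Submodule.sum_mem _ fun m _ => Submodule.smul_mem _ _ (Submodule.subset_span ⟨m, rfl⟩)

theorem span_range_eq_adjoin_of_mulVec_eq_smul (A : Matrix n n K) {μ : L}
    (hμ : IsIntegral K μ) {v : n → L} (hv0 : v ≠ 0) (hv : A.map (algebraMap K L) *ᵥ v = μ • v)
    (hvμ : ∀ i, v i ∈ K⟮μ⟯) :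
    Submodule.span K (Set.range v) = Subalgebra.toSubmodule K⟮μ⟯.toSubalgebra := by
  refine le_antisymm (Submodule.span_le.mpr <| Set.range_subset_iff.mpr hvμ) fun x hx => ?_
  have hadjoin : ∀ c ∈ Algebra.adjoin K {μ}, ∀ y ∈ Submodule.span K (Set.range v),
      c * y ∈ Submodule.span K (Set.range v) := by
    intro c hc
    induction hc using Algebra.adjoin_induction with
    | mem c hc =>
      rw [Set.mem_singleton_iff.mp hc]
      exact fun y hy => mul_mem_span_range_of_mulVec_eq_smul A hv hy
    | algebraMap r =>
      intro y hy
      simpa only [Algebra.smul_def] using Submodule.smul_mem _ r hy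
    | add c d _ _ hc hd =>
      intro y hy
      rw [add_mul]
      exact add_mem (hc y hy) (hd y hy)
    | mul c d _ _ hc hd =>
      intro y hy
      rw [mul_assoc]
      exact hc _ (hd y hy)
  obtain ⟨i, hi⟩ := Function.ne_iff.mp hv0
  have hc : x * (v i)⁻¹ ∈ Algebra.adjoin K {μ} := by
    rw [← adjoin_simple_toSubalgebra_of_isAlgebraic hμ.isAlgebraic, mem_toSubalgebra]
    exact mul_mem hx (inv_mem (hvμ i))
  simpa only [inv_mul_cancel_right₀ hi] using
    hadjoin _ hc (v i) (Submodule.subset_span ⟨i, rfl⟩)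

theorem exists_mulVec_eq_smul_span_eq_adjoin [DecidableEq n] (A : Matrix n n K) {μ : L}
    (hμ : aeval μ A.charpoly = 0) :
    ∃ v ≠ 0, A.map (algebraMap K L) *ᵥ v = μ • v ∧ (∀ i, v i ∈ K⟮μ⟯) ∧
      Submodule.span K (Set.range v) = Subalgebra.toSubmodule K⟮μ⟯.toSubalgebra := by
  obtain ⟨v, hv0, hv, hvμ⟩ := exists_mulVec_eq_smul_of_aeval_charpoly A hμ
  exact ⟨v, hv0, hv, hvμ,
    span_range_eq_adjoin_of_mulVec_eq_smul A ⟨_, A.charpoly_monic, hμ⟩ hv0 hv hvμ⟩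

theorem exists_vecMul_eq_smul_span_eq_adjoin [DecidableEq n] (A : Matrix n n K) {μ : L}
    (hμ : aeval μ A.charpoly = 0) :
    ∃ w ≠ 0, w ᵥ* A.map (algebraMap K L) = μ • w ∧ (∀ i, w i ∈ K⟮μ⟯) ∧
      Submodule.span K (Set.range w) = Subalgebra.toSubmodule K⟮μ⟯.toSubalgebra := by
  simpa only [transpose_map, mulVec_transpose] using
    exists_mulVec_eq_smul_span_eq_adjoin Aᵀ (L := L) (by rwa [charpoly_transpose])

end Matrix

theorem stmt_8_general {k : ℕ} (A : Matrix (Fin k) (Fin k) ℤ)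
    (lam : ℝ)
    (heig : ∃ v : Fin k → ℝ, v ≠ 0 ∧ (A.map (Int.cast : ℤ → ℝ)) *ᵥ v = lam • v) :
    (∃ v : Fin k → ℝ, v ≠ 0 ∧ (A.map (Int.cast : ℤ → ℝ)) *ᵥ v = lam • v ∧
      (∀ i, v i ∈ ℚ⟮lam⟯) ∧
      Submodule.span ℚ (Set.range v) = Subalgebra.toSubmodule (ℚ⟮lam⟯).toSubalgebra) ∧
    (∃ w : Fin k → ℝ, w ≠ 0 ∧ w ᵥ* (A.map (Int.cast : ℤ → ℝ)) = lam • w ∧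
      (∀ i, w i ∈ ℚ⟮lam⟯) ∧
      Submodule.span ℚ (Set.range w) = Subalgebra.toSubmodule (ℚ⟮lam⟯).toSubalgebra) := by
  set B : Matrix (Fin k) (Fin k) ℚ := A.map (Int.cast : ℤ → ℚ)
  have hB : A.map (Int.cast : ℤ → ℝ) = B.map (algebraMap ℚ ℝ) := by
    ext i j
    simp [B]
  rw [hB] at heig ⊢
  have hroot : aeval lam B.charpoly = 0 :=
    (exists_mulVec_eq_smul_iff_aeval_charpoly B lam).mp heig
  exact ⟨exists_mulVec_eq_smul_span_eq_adjoin B hroot,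
    exists_vecMul_eq_smul_span_eq_adjoin B hroot⟩

theorem stmt_8 {k : ℕ} (A : Matrix (Fin k) (Fin k) ℤ)
    (hprim : ∃ N : ℕ, 0 < N ∧ ∀ i j, 0 < (A ^ N) i j)
    (lam : ℝ)
    (heig : ∃ v : Fin k → ℝ, v ≠ 0 ∧ (A.map (Int.cast : ℤ → ℝ)) *ᵥ v = lam • v)
    (hmax : ∀ μ : ℂ, μ ≠ (lam : ℂ) →
      (∃ u : Fin k → ℂ, u ≠ 0 ∧ (A.map (Int.cast : ℤ → ℂ)) *ᵥ u = μ • u) →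
      ‖μ‖ < lam) :
    (∃ v : Fin k → ℝ, v ≠ 0 ∧ (A.map (Int.cast : ℤ → ℝ)) *ᵥ v = lam • v ∧
      (∀ i, v i ∈ ℚ⟮lam⟯) ∧
      Submodule.span ℚ (Set.range v) = Subalgebra.toSubmodule (ℚ⟮lam⟯).toSubalgebra) ∧
    (∃ w : Fin k → ℝ, w ≠ 0 ∧ w ᵥ* (A.map (Int.cast : ℤ → ℝ)) = lam • w ∧
      (∀ i, w i ∈ ℚ⟮lam⟯) ∧
      Submodule.span ℚ (Set.range w) = Subalgebra.toSubmodule (ℚ⟮lam⟯).toSubalgebra) :=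
  stmt_8_general A lam heig
end

section
/- Let L be a finite field extension of ℚ and let K be an intermediate field with dim_ℚ K = n. Then there exists a basis ζ₁, …, ζₙ of K as a ℚ-vector space such that ζ₁ = 1 and, for all indices i > j, the field trace of ζᵢ/ζⱼ from L to ℚ is zero (each basis element ζᵢ is nonzero, so the quotients ζᵢ/ζⱼ are well-defined elements of L). -/
/-!
A Gram–Schmidt process for the non-symmetric pairing `(x, z) ↦ Tr(x / z)`: starting from
`ζ₁ = 1`, choose `ζₖ₊₁ ≠ 0` in the common kernel of the `k` functionals `x ↦ Tr(x / ζⱼ)`,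
`j ≤ k`, which is nonzero as long as `k < n`. The matrix `(Tr(ζᵢ / ζⱼ))` is then triangular
with diagonal `Tr(1) = [L : ℚ] ≠ 0`, so the `ζᵢ` are linearly independent.
-/

open Module

section LinearAlgebra

variable {F V : Type*} [Field F] [AddCommGroup V] [Module F V]

theorem Module.Dual.exists_ne_zero_forall_apply_eq_zero [FiniteDimensional F V] {ι : Type*}
    [Fintype ι] (f : ι → Dual F V) (h : Fintype.card ι < finrank F V) :
    ∃ v ≠ 0, ∀ i, f i v = 0 := by
  have hker := (LinearMap.pi f).ker_ne_bot_of_finrank_lt (by rwa [finrank_fintype_fun_eq_card])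
  obtain ⟨v, hv, hv0⟩ := Submodule.exists_mem_ne_zero_of_ne_bot hker
  exact ⟨v, hv0, fun i => congrFun (LinearMap.mem_ker.mp hv) i⟩

theorem linearIndependent_of_dual_triangular {ι : Type*} [Fintype ι] [LinearOrder ι]
    (v : ι → V) (f : ι → Dual F V) (hlt : ∀ i j, i < j → f i (v j) = 0)
    (hdiag : ∀ i, f i (v i) ≠ 0) : LinearIndependent F v := by
  let M : Matrix ι ι F := Matrix.of fun i j => f j (v i)
  have hdet : M.det ≠ 0 := by
    rw [Matrix.det_of_isUpperTriangular (M := M) fun i j => hlt j i]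
    exact Finset.prod_ne_zero_iff.mpr fun i _ => hdiag i
  refine Fintype.linearIndependent_iff.mpr fun g hg =>
    congrFun (Matrix.eq_zero_of_vecMul_eq_zero hdet ?_)
  ext j
  simpa [Matrix.vecMul, dotProduct, M, mul_comm] using congrArg (f j) hg

theorem exists_dual_triangular_family [FiniteDimensional F V] (φ : V → Dual F V) {v₀ : V}
    (hv₀ : v₀ ≠ 0) {k : ℕ} (hk : k < finrank F V) :
    ∃ ζ : Fin (k + 1) → V, ζ 0 = v₀ ∧ (∀ i, ζ i ≠ 0) ∧ ∀ i j, j < i → φ (ζ j) (ζ i) = 0 := by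
  induction k with
  | zero => exact ⟨fun _ => v₀, rfl, fun _ => hv₀, fun i j hji => absurd hji (by omega)⟩
  | succ k ih =>
    obtain ⟨ζ, hζ₀, hζne, hζ⟩ := ih (by omega)
    obtain ⟨x, hx0, hx⟩ := Dual.exists_ne_zero_forall_apply_eq_zero (fun j => φ (ζ j))
      (by simpa using hk)
    refine ⟨Fin.snoc ζ x, by simpa using hζ₀, Fin.lastCases (by simpa) (by simpa), ?_⟩
    intro i j hji
    obtain ⟨j, rfl⟩ := Fin.exists_castSucc_eq.mpr (hji.trans_le (Fin.le_last i)).ne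
    cases i using Fin.lastCases with
    | last => simpa using hx j
    | cast i => simpa using hζ i j (by simpa using hji)

end LinearAlgebra

namespace IntermediateField

variable {F L : Type*} [Field F] [Field L] [Algebra F L] (K : IntermediateField F L)

noncomputable def traceDiv (z : L) : Dual F K :=
  Algebra.trace F L ∘ₗ LinearMap.mulRight F z⁻¹ ∘ₗ K.val.toLinearMap

@[simp]
theorem traceDiv_apply (z : L) (x : K) : K.traceDiv z x = Algebra.trace F L (x / z) := by
  simp [traceDiv, div_eq_mul_inv]

theorem traceDiv_self [FiniteDimensional F L] {z : K} (hz : z ≠ 0) :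
    K.traceDiv z z = finrank F L := by
  simpa [hz] using Algebra.trace_algebraMap (S := L) (1 : F)

end IntermediateField

theorem stmt_9 (L : Type*) [Field L] [Algebra ℚ L] [FiniteDimensional ℚ L]
    (K : IntermediateField ℚ L) (n : ℕ) (hn : Module.finrank ℚ K = n) (hn0 : 0 < n) :
    ∃ b : Module.Basis (Fin n) ℚ K, b ⟨0, hn0⟩ = 1 ∧
      ∀ i j : Fin n, (j : ℕ) < (i : ℕ) →
        Algebra.trace ℚ L ((b i : L) / (b j : L)) = 0 := by
  obtain ⟨m, rfl⟩ : ∃ m, n = m + 1 := ⟨n - 1, by omega⟩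
  obtain ⟨ζ, hζ₀, hζne, hζ⟩ := exists_dual_triangular_family (fun z : K => K.traceDiv z)
    one_ne_zero (show m < finrank ℚ K by omega)
  have hli : LinearIndependent ℚ ζ :=
    linearIndependent_of_dual_triangular ζ (fun i => K.traceDiv (ζ i)) (fun i j h => hζ j i h)
      fun i => by rw [K.traceDiv_self (hζne i)]; exact_mod_cast finrank_pos.ne'
  refine ⟨basisOfLinearIndependentOfCardEqFinrank hli (by simp [hn]), ?_, fun i j hji => ?_⟩
  · simpa using hζ₀
  · simpa using hζ i j hji
end

section
/- Let K be an abelian group, let β : K → K be a group automorphism, and let F ⊆ K be a finite subset such that the subgroups ⟨β^n(F)⟩ form an increasing chain (⟨β^n(F)⟩ ⊆ ⟨β^{n+1}(F)⟩ for all n ≥ 0) whose union is K. Then for every k ∈ K and every integer m ≥ 1 there exists a positive integer c such that, for every positive integer a, both β^{ac}(k) − k and β^{−ac}(k) − k lie in the subgroup mK = {m·y : y ∈ K}. -/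
/-!
Pass to `Q = K ⧸ mK`, on which `β` induces an automorphism `β'`. The images in `Q` of the
subgroups `⟨βⁿ(F)⟩` are finitely generated torsion abelian groups, hence finite; `β'` maps
each onto the next, so along the increasing chain they all have the same cardinality and the
chain is constant. As the chain exhausts `Q`, the group `Q` is finite, hence so is its
automorphism group, and `c` can be taken to be the order of `β'`.
-/

namespace AddSubgroup

variable {G : Type*} [AddGroup G]

theorem eq_of_le_succ_of_map_eq_succ (e : G ≃+ G) {S : ℕ → AddSubgroup G} [Finite (S 0)]
    (hle : ∀ n, S n ≤ S (n + 1)) (hmap : ∀ n, (S n).map (e : G →+ G) = S (n + 1)) :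
    ∀ n, S n = S 0 := by
  intro n
  induction n with
  | zero => rfl
  | succ n ih =>
    have : Finite (S n) := ih ▸ inferInstance
    have hcard : Nat.card (S (n + 1)) = Nat.card (S n) := by
      rw [← hmap n, card_map_of_injective e.injective]
    have : Finite (S (n + 1)) := Nat.finite_of_card_ne_zero (hcard ▸ Nat.card_pos.ne')
    rw [← ih]
    exact (eq_of_le_of_card_ge (hle n) hcard.le).symm

theorem map_closure_image_nsmul (γ : AddAut G) (s : Set G) (n : ℕ) :
    (closure (⇑(n • γ) '' s)).map (γ : G →+ G) = closure (⇑((n + 1) • γ) '' s) := by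
  rw [AddMonoidHom.map_closure, Set.image_image, succ_nsmul']
  rfl

theorem finite_closure_of_isAddTorsion {Q : Type*} [AddCommGroup Q] (hQ : IsAddTorsion Q)
    {s : Set Q} (hs : s.Finite) : Finite (closure s) :=
  have := hs.to_subtype
  AddCommGroup.finite_of_fg_isAddTorsion _ (hQ.addSubgroup _)

instance characteristic_range_nsmul {K : Type*} [AddCommGroup K] (m : ℕ) :
    (nsmulAddMonoidHom m : K →+ K).range.Characteristic :=
  characteristic_iff_map_le.mpr fun ϕ => by
    rintro _ ⟨_, ⟨y, rfl⟩, rfl⟩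
    exact ⟨ϕ y, (map_nsmul ϕ m y).symm⟩

end AddSubgroup

theorem AddCommGroup.finite_of_isAddTorsion_of_closure_chain {Q : Type*} [AddCommGroup Q]
    (hQ : IsAddTorsion Q) (γ : AddAut Q) {F : Set Q} (hF : F.Finite)
    (hchain : ∀ n : ℕ,
      AddSubgroup.closure (⇑(n • γ) '' F) ≤ AddSubgroup.closure (⇑((n + 1) • γ) '' F))
    (hunion : ∀ q : Q, ∃ n : ℕ, q ∈ AddSubgroup.closure (⇑(n • γ) '' F)) :
    Finite Q := by
  have := AddSubgroup.finite_closure_of_isAddTorsion hQ (hF.image ⇑(0 • γ))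
  have hstab := AddSubgroup.eq_of_le_succ_of_map_eq_succ γ hchain
    (AddSubgroup.map_closure_image_nsmul γ F)
  refine Finite.of_surjective (fun q : AddSubgroup.closure (⇑(0 • γ) '' F) => (q : Q)) fun q => ?_
  obtain ⟨n, hn⟩ := hunion q
  exact ⟨⟨q, hstab n ▸ hn⟩, rfl⟩

namespace AddAut

variable {G : Type*} [AddGroup G] (H : AddSubgroup G) [H.Characteristic]

def quotient : AddAut G →+ AddAut (G ⧸ H) where
  toFun γ := QuotientAddGroup.congr H H γ
    (AddSubgroup.characteristic_iff_map_eq.mp inferInstance γ)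
  map_zero' := by
    ext q
    induction q using QuotientAddGroup.induction_on
    rfl
  map_add' γ δ := by
    ext q
    induction q using QuotientAddGroup.induction_on
    rfl

@[simp]
theorem quotient_apply_mk (γ : AddAut G) (g : G) :
    quotient H γ (g : G ⧸ H) = (γ g : G ⧸ H) :=
  rfl

theorem closure_image_nsmul_quotient (γ : AddAut G) (F : Set G) (n : ℕ) :
    AddSubgroup.closure (⇑(n • quotient H γ) '' ((↑) '' F)) =
      (AddSubgroup.closure (⇑(n • γ) '' F)).map (QuotientAddGroup.mk' H) := by
  rw [AddMonoidHom.map_closure, Set.image_image, Set.image_image, ← map_nsmul]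
  rfl

end AddAut

section RangeNsmul

variable {K : Type*} [AddCommGroup K] {m : ℕ}

theorem isAddTorsion_quotient_range_nsmul (hm : 0 < m) :
    IsAddTorsion (K ⧸ (nsmulAddMonoidHom m : K →+ K).range) := by
  intro q
  induction q using QuotientAddGroup.induction_on with | H z => ?_
  refine isOfFinAddOrder_iff_nsmul_eq_zero.mpr ⟨m, hm, ?_⟩
  rw [← QuotientAddGroup.mk_nsmul, QuotientAddGroup.eq_zero_iff]
  exact ⟨z, rfl⟩

theorem exists_sub_eq_nsmul_of_quotient_eq_zero {γ : AddAut K}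
    (hγ : AddAut.quotient (nsmulAddMonoidHom m : K →+ K).range γ = 0) (x : K) :
    ∃ y : K, γ x - x = m • y := by
  have h := congrArg (· (x : K ⧸ (nsmulAddMonoidHom m : K →+ K).range)) hγ
  simp only [AddAut.quotient_apply_mk, AddAut.zero_apply, QuotientAddGroup.eq_iff_sub_mem] at h
  obtain ⟨y, hy⟩ := h
  exact ⟨y, hy.symm⟩

end RangeNsmul

theorem stmt_11 {K : Type*} [AddCommGroup K] (β : AddAut K) (F : Set K) (hF : F.Finite)
    (hchain : ∀ n : ℕ,
      AddSubgroup.closure (⇑(n • β) '' F) ≤ AddSubgroup.closure (⇑((n + 1) • β) '' F))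
    (hunion : ∀ x : K, ∃ n : ℕ, x ∈ AddSubgroup.closure (⇑(n • β) '' F))
    (x : K) (m : ℕ) (hm : 1 ≤ m) :
    ∃ c : ℕ, 0 < c ∧ ∀ a : ℕ, 0 < a →
      (∃ y : K, ((a * c) • β) x - x = m • y) ∧
      (∃ y : K, ((a * c) • -β) x - x = m • y) := by
  set H := (nsmulAddMonoidHom m : K →+ K).range
  set β' := AddAut.quotient H β
  have : Finite (K ⧸ H) := by
    refine AddCommGroup.finite_of_isAddTorsion_of_closure_chain
      (isAddTorsion_quotient_range_nsmul hm) β' (hF.image ((↑) : K → K ⧸ H))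
      (fun n => ?_) fun q => ?_
    · rw [AddAut.closure_image_nsmul_quotient, AddAut.closure_image_nsmul_quotient]
      exact AddSubgroup.map_mono (hchain n)
    · induction q using QuotientAddGroup.induction_on with | H z => ?_
      obtain ⟨n, hn⟩ := hunion z
      exact ⟨n, AddAut.closure_image_nsmul_quotient H β F n ▸ AddSubgroup.mem_map_of_mem _ hn⟩
  have hc (a : ℕ) : (a * addOrderOf β') • β' = 0 := by
    rw [mul_comm, mul_nsmul, addOrderOf_nsmul_eq_zero, nsmul_zero]
  refine ⟨addOrderOf β', addOrderOf_pos β', fun a _ => ⟨?_, ?_⟩⟩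
  · exact exists_sub_eq_nsmul_of_quotient_eq_zero (by rw [map_nsmul, hc]) x
  · exact exists_sub_eq_nsmul_of_quotient_eq_zero
      (by rw [map_nsmul, map_neg, neg_nsmul, hc, neg_zero]) x
end

section
/- Let G be a torsion-free abelian group, let α : G → G be a group automorphism, and let F ⊆ G be a finite subset such that the subgroups ⟨α^n(F)⟩ form an increasing chain (⟨α^n(F)⟩ ⊆ ⟨α^{n+1}(F)⟩ for all n ≥ 0) whose union is G. Then G is stationary: there exist a natural number k and a k×k integer matrix A such that G is isomorphic, as an abelian group, to the direct limit of the ℕ-indexed direct system whose n-th group is ℤ^k and whose transition map from stage n to stage n' ≥ n is multiplication by A^{n'−n}. -/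
/-!
Let `N = ⟨F⟩`. The chain condition at `n = 0` says that `α⁻¹` maps `N` into itself, and `N` is
finitely generated and torsion-free, hence free of some finite rank `k`; let `A` be the matrix
of `α⁻¹|_N` in a basis. The maps `ℤ^k ≅ N → G`, `v ↦ αⁿ v` at stage `n`, are compatible with
`A` because `αⁿ⁺ᵐ ∘ α⁻ᵐ = αⁿ`, they are injective, and by the union condition their images
exhaust `G`; so they induce an isomorphism from the direct limit onto `G`.
-/

open Module

namespace Module.DirectLimit

variable {R ι : Type*} [Semiring R] [Preorder ι] [DecidableEq ι] [IsDirectedOrder ι]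
  {V : ι → Type*} [∀ i, AddCommMonoid (V i)] [∀ i, Module R (V i)]
  {f : ∀ i j, i ≤ j → V i →ₗ[R] V j} {P : Type*} [AddCommMonoid P] [Module R P]

theorem lift_bijective (g : ∀ i, V i →ₗ[R] P) (Hg : ∀ i j hij x, g j (f i j hij x) = g i x)
    (hinj : ∀ i, Function.Injective (g i)) (hcover : ∀ p, ∃ i x, g i x = p) :
    Function.Bijective (lift R ι V f g Hg) :=
  ⟨lift_injective _ _ hinj, fun p ↦
    let ⟨i, x, hx⟩ := hcover p
    ⟨of R ι V f i x, by rw [lift_of, hx]⟩⟩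

end Module.DirectLimit

theorem LinearMap.toMatrix_pow_mulVec_repr {R M ι : Type*} [CommSemiring R] [AddCommMonoid M]
    [Module R M] [Fintype ι] [DecidableEq ι] (b : Basis ι R M) (T : Module.End R M) (m : ℕ)
    (x : M) :
    (toMatrix b b T ^ m).mulVec (b.repr x) = b.repr ((T ^ m) x) := by
  rw [toMatrix_pow, toMatrix_mulVec_repr]

section StationarySystem

variable {R G ι : Type*} [CommSemiring R] [AddCommMonoid G] [Module R G] (e : G ≃ₗ[R] G)
  {N : Submodule R G} (hN : ∀ x ∈ N, e.symm x ∈ N)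

def LinearEquiv.restrictSymm : Module.End R N := (e.symm : G →ₗ[R] G).restrict hN

theorem LinearEquiv.pow_apply_restrictSymm_pow {i j : ℕ} (hij : i ≤ j) (x : N) :
    (e ^ j) ((e.restrictSymm hN ^ (j - i)) x) = (e ^ i) x := by
  obtain ⟨m, rfl⟩ := Nat.exists_eq_add_of_le hij
  rw [restrictSymm, Module.End.pow_restrict, LinearMap.coe_restrict_apply,
    Nat.add_sub_cancel_left, pow_add, mul_apply, Module.End.pow_apply, coe_coe, e.pow_apply m,
    Function.LeftInverse.iterate e.apply_symm_apply m]

variable [Fintype ι] [DecidableEq ι]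

theorem LinearEquiv.nonempty_equiv_directLimit_matrix_pow (b : Basis ι R N)
    (hcover : ∀ g : G, ∃ n : ℕ, g ∈ N.map (e ^ n).toLinearMap) :
    Nonempty (G ≃ₗ[R] DirectLimit (fun _ : ℕ ↦ ι → R) fun i j _ ↦
      (LinearMap.toMatrix b b (e.restrictSymm hN) ^ (j - i)).mulVecLin) := by
  let g (n : ℕ) : (ι → R) →ₗ[R] G :=
    (e ^ n).toLinearMap ∘ₗ N.subtype ∘ₗ b.equivFun.symm.toLinearMap
  have hg (n : ℕ) (x : N) : g n (b.repr x) = (e ^ n) x := by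
    simp only [g, LinearMap.comp_apply, ← b.equivFun_apply, LinearEquiv.coe_coe,
      LinearEquiv.symm_apply_apply, Submodule.subtype_apply]
  have Hg (i j : ℕ) (hij : i ≤ j) (v : ι → R) :
      g j ((LinearMap.toMatrix b b (e.restrictSymm hN) ^ (j - i)).mulVecLin v) = g i v := by
    obtain ⟨x, rfl⟩ := b.equivFun.surjective v
    rw [b.equivFun_apply, Matrix.mulVecLin_apply, LinearMap.toMatrix_pow_mulVec_repr, hg, hg,
      e.pow_apply_restrictSymm_pow hN hij]
  have hinj (n : ℕ) : Function.Injective (g n) := by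
    simp only [g, LinearMap.coe_comp, LinearEquiv.coe_coe]
    exact (e ^ n).injective.comp (Subtype.val_injective.comp b.equivFun.symm.injective)
  have hsurj (y : G) : ∃ n v, g n v = y := by
    obtain ⟨n, x, hx, rfl⟩ := hcover y
    exact ⟨n, b.repr ⟨x, hx⟩, hg n ⟨x, hx⟩⟩
  exact ⟨(LinearEquiv.ofBijective _ (DirectLimit.lift_bijective g Hg hinj hsurj)).symm⟩

end StationarySystem

section AddAut

variable {G : Type*} [AddCommGroup G]

-- The additive structure of `AddAut G` is composition, so `n • α` is the `n`-th iterate of `α`.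
theorem AddAut.coe_nsmul (α : AddAut G) (n : ℕ) : ⇑(n • α) = ⇑(α.toIntLinearEquiv ^ n) := by
  induction n with
  | zero => rfl
  | succ n ih =>
    ext x
    rw [succ_nsmul, AddAut.add_apply, pow_succ, LinearEquiv.mul_apply, ← ih]
    rfl

theorem AddAut.closure_image_nsmul (α : AddAut G) (F : Set G) (n : ℕ) :
    AddSubgroup.closure (⇑(n • α) '' F) =
      ((Submodule.span ℤ F).map (α.toIntLinearEquiv ^ n).toLinearMap).toAddSubgroup := by
  rw [Submodule.map_span, Submodule.span_int_eq_addSubgroupClosure, LinearEquiv.coe_toLinearMap,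
    AddAut.coe_nsmul]

end AddAut

theorem stmt_12 {G : Type*} [AddCommGroup G]
    (htf : ∀ (n : ℕ) (g : G), 0 < n → n • g = 0 → g = 0)
    (α : AddAut G) (F : Set G) (hF : F.Finite)
    (hchain : ∀ n : ℕ,
      AddSubgroup.closure (⇑(n • α) '' F) ≤ AddSubgroup.closure (⇑((n + 1) • α) '' F))
    (hunion : ∀ g : G, ∃ n : ℕ, g ∈ AddSubgroup.closure (⇑(n • α) '' F)) :
    ∃ (k : ℕ) (A : Matrix (Fin k) (Fin k) ℤ),
      Nonempty (G ≃+ Module.DirectLimit (fun _ : ℕ => Fin k → ℤ)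
        (fun i j _ => Matrix.mulVecLin (A ^ (j - i)))) := by
  have : IsAddTorsionFree G := isAddTorsionFree_iff_not_isOfFinAddOrder.2 fun g hg hfin ↦
    let ⟨n, hn, hng⟩ := isOfFinAddOrder_iff_nsmul_eq_zero.1 hfin
    hg (htf n g hn hng)
  set e : G ≃ₗ[ℤ] G := α.toIntLinearEquiv
  set N := Submodule.span ℤ F
  have hN : ∀ x ∈ N, e.symm x ∈ N := by
    have h := hchain 0
    rw [α.closure_image_nsmul, α.closure_image_nsmul, Submodule.toAddSubgroup_le, zero_add,
      pow_zero, LinearEquiv.coe_toLinearMap_one, Submodule.map_id, pow_one,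
      Submodule.map_equiv_eq_comap_symm] at h
    exact h
  have hcover (g : G) : ∃ n : ℕ, g ∈ N.map (e ^ n).toLinearMap := by
    simpa only [α.closure_image_nsmul, Submodule.mem_toAddSubgroup] using hunion g
  have : Module.Finite ℤ N := Module.Finite.span_of_finite ℤ hF
  obtain ⟨L⟩ := e.nonempty_equiv_directLimit_matrix_pow hN (Module.finBasis ℤ N) hcover
  exact ⟨_, _, ⟨L.toAddEquiv⟩⟩
end

section
/- Let A be a k×k primitive integer matrix, let λ be its Perron–Frobenius eigenvalue (so λ is a real eigenvalue of A and every complex eigenvalue μ ≠ λ of A satisfies |μ| < λ), let n be the degree of the minimal polynomial of λ over ℚ, and let w ∈ ℝ^k be a left λ-eigenvector of A all of whose entries are strictly positive. Then the subgroup L = {x ∈ ℤ^k : w·x = 0} of ℤ^k is free abelian of rank k − n. -/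
/-!
Being a root of the characteristic polynomial of `A`, the eigenvalue `λ` has a left eigenvector
`u` with entries in `K = ℚ(λ)`. As some power of `A` is positive, the real left `λ`-eigenspace is
the line through `w` (Perron–Frobenius), so `w` is a real multiple of `u`. The entries of `u` span
a nonzero `ℚ`-subspace of `K` stable under multiplication by `λ`, that is all of `K`; hence the
entries of `w` span a `ℚ`-space of dimension `n`. Now `L` is the kernel of `x ↦ w·x` on `ℤᵏ`,
whose image is the `ℤ`-span of the entries of `w`, of rank `n`, and rank–nullity over `ℤ` gives
`k - n`.
-/

open Matrix Module Submodule Set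

theorem Matrix.exists_vecMul_eq_smul_iff_isRoot_charpoly {ι R : Type*} [Fintype ι] [DecidableEq ι]
    [CommRing R] [IsDomain R] (M : Matrix ι ι R) (μ : R) :
    (∃ v ≠ 0, v ᵥ* M = μ • v) ↔ M.charpoly.IsRoot μ := by
  rw [Polynomial.IsRoot, eval_charpoly, ← exists_vecMul_eq_zero_iff]
  simp only [vecMul_sub, sub_eq_zero, scalar_apply, vecMul_diagonal_const, op_smul_eq_smul, eq_comm]

theorem Matrix.vecMul_pow_of_vecMul_eq_smul {ι R : Type*} [Fintype ι] [DecidableEq ι]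
    [CommSemiring R] {M : Matrix ι ι R} {μ : R} {v : ι → R} (h : v ᵥ* M = μ • v) (m : ℕ) :
    v ᵥ* M ^ m = μ ^ m • v := by
  induction m with
  | zero => simp
  | succ m ih => rw [pow_succ, ← vecMul_vecMul, ih, smul_vecMul, h, smul_smul, pow_succ]

theorem Matrix.isIntegral_of_vecMul_eq_smul {ι R S : Type*} [Fintype ι] [DecidableEq ι]
    [CommRing R] [CommRing S] [IsDomain S] [Algebra R S] (M : Matrix ι ι R) {μ : S}
    (h : ∃ v ≠ 0, v ᵥ* M.map (algebraMap R S) = μ • v) : IsIntegral R μ := by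
  rw [exists_vecMul_eq_smul_iff_isRoot_charpoly, charpoly_map, Polynomial.IsRoot,
    Polynomial.eval_map] at h
  exact ⟨M.charpoly, M.charpoly_monic, h⟩

theorem Matrix.exists_vecMul_eq_smul_of_map {ι K L : Type*} [Fintype ι] [DecidableEq ι]
    [Field K] [CommRing L] [IsDomain L] (f : K →+* L) (M : Matrix ι ι K) (μ : K)
    (h : ∃ v ≠ 0, v ᵥ* M.map f = f μ • v) : ∃ u ≠ 0, u ᵥ* M = μ • u := by
  rw [exists_vecMul_eq_smul_iff_isRoot_charpoly, charpoly_map] at h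
  rw [exists_vecMul_eq_smul_iff_isRoot_charpoly]
  exact h.of_map f.injective

theorem Matrix.exists_eq_smul_of_vecMul_eq_smul_of_pos {ι 𝕜 : Type*} [Fintype ι] [Field 𝕜]
    [LinearOrder 𝕜] [IsStrictOrderedRing 𝕜] {B : Matrix ι ι 𝕜} (hB : ∀ i j, 0 < B i j)
    {ρ : 𝕜} {w u : ι → 𝕜} (hw_pos : ∀ i, 0 < w i) (hw : w ᵥ* B = ρ • w)
    (hu : u ᵥ* B = ρ • u) : ∃ c : 𝕜, u = c • w := by
  cases isEmpty_or_nonempty ι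
  · exact ⟨0, Subsingleton.elim _ _⟩
  -- `c` is the largest scalar with `c • w ≤ u`; then `u - c • w` is a nonnegative eigenvector
  -- with a zero entry, which positivity of `B` forces to vanish.
  obtain ⟨i₀, -, hi₀⟩ :=
    Finset.exists_min_image Finset.univ (fun i => u i / w i) Finset.univ_nonempty
  set c := u i₀ / w i₀
  refine ⟨c, ?_⟩
  set v := u - c • w with hv
  have hv_nonneg : ∀ i, 0 ≤ v i := fun i => by
    have := (le_div_iff₀ (hw_pos i)).1 (hi₀ i (Finset.mem_univ i))
    simp only [hv, Pi.sub_apply, Pi.smul_apply, smul_eq_mul]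
    linarith
  have hv_zero : v i₀ = 0 := by
    simp [hv, c, div_mul_cancel₀ _ (hw_pos i₀).ne']
  have hv_eig : v ᵥ* B = ρ • v := by
    rw [hv, sub_vecMul, smul_vecMul, hw, hu, smul_sub, smul_comm]
  suffices v = 0 from sub_eq_zero.1 this
  by_contra hne
  obtain ⟨j, hj⟩ := Function.ne_iff.mp hne
  have hpos : 0 < (v ᵥ* B) i₀ :=
    Finset.sum_pos' (fun i _ => mul_nonneg (hv_nonneg i) (hB i i₀).le)
      ⟨j, Finset.mem_univ j, mul_pos ((hv_nonneg j).lt_of_ne' hj) (hB j i₀)⟩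
  simp [hv_eig, hv_zero] at hpos

theorem Submodule.eq_top_of_mul_gen_mem {F K : Type*} [Field F] [DivisionRing K] [Algebra F K]
    (pb : PowerBasis F K) {S : Submodule F K} (hS : S ≠ ⊥) (hmul : ∀ s ∈ S, pb.gen * s ∈ S) :
    S = ⊤ := by
  have hmul' : ∀ a : K, ∀ s ∈ S, a * s ∈ S := fun a => by
    have ha : a ∈ Algebra.adjoin F {pb.gen} := pb.adjoin_gen_eq_top ▸ Algebra.mem_top
    induction ha using Algebra.adjoin_induction with
    | mem x hx => exact (mem_singleton_iff.1 hx) ▸ hmul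
    | algebraMap r => exact fun s hs => by simpa [← Algebra.smul_def] using S.smul_mem r hs
    | add x y _ _ hx hy => exact fun s hs => add_mul x y s ▸ S.add_mem (hx s hs) (hy s hs)
    | mul x y _ _ hx hy => exact fun s hs => mul_assoc x y s ▸ hx _ (hy s hs)
  obtain ⟨s, hs, hs0⟩ := S.ne_bot_iff.1 hS
  refine eq_top_iff'.2 fun a => ?_
  simpa [hs0] using hmul' (a * s⁻¹) s hs

theorem Matrix.mul_mem_span_range_of_vecMul_eq_smul {ι F K : Type*} [Fintype ι] [Field F]
    [Field K] [Algebra F K] (A : Matrix ι ι ℤ) {μ : K} {u : ι → K}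
    (hu : u ᵥ* A.map (Int.cast : ℤ → K) = μ • u) {s : K} (hs : s ∈ span F (range u)) :
    μ * s ∈ span F (range u) := by
  induction hs using Submodule.span_induction with
  | mem x hx =>
    obtain ⟨j, rfl⟩ := hx
    have : μ * u j = ∑ i, A i j • u i := by
      rw [← smul_eq_mul, ← Pi.smul_apply μ u j, ← hu]
      simp [vecMul, dotProduct, zsmul_eq_mul, mul_comm]
    rw [this]
    exact sum_mem fun i _ => zsmul_mem (subset_span (mem_range_self i)) _
  | zero => simp
  | add x y _ _ hx hy => rw [mul_add]; exact add_mem hx hy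
  | smul r x _ hx => rw [mul_smul_comm]; exact smul_mem _ r hx

theorem finrank_ker_linearCombination {ι V : Type*} [Fintype ι] [AddCommGroup V] [Module ℚ V]
    (w : ι → V) :
    finrank ℤ (LinearMap.ker (Fintype.linearCombination ℤ w)) =
      Fintype.card ι - finrank ℚ (span ℚ (range w)) := by
  have := Module.Finite.span_of_finite ℤ (finite_range w)
  have := Module.IsTorsionFree.trans_faithfulSMul ℤ ℚ V
  have h := Submodule.finrank_quotient_add_finrank (LinearMap.ker (Fintype.linearCombination ℤ w))
  rw [(LinearMap.quotKerEquivRange _).finrank_eq, Fintype.range_linearCombination,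
    ← finrank_span_eq_finrank_span ℤ ℚ, Module.finrank_fintype_fun_eq_card] at h
  omega

open IntermediateField in
theorem Matrix.finrank_span_range_eq_natDegree_minpoly {ι : Type*} [Fintype ι] [DecidableEq ι]
    [Nonempty ι] (A : Matrix ι ι ℤ) {N : ℕ} (hN : ∀ i j, 0 < (A ^ N) i j) {lam : ℝ}
    {w : ι → ℝ} (hw_pos : ∀ i, 0 < w i) (hw : w ᵥ* A.map (Int.cast : ℤ → ℝ) = lam • w) :
    finrank ℚ (span ℚ (range w)) = (minpoly ℚ lam).natDegree := by
  have hw0 : w ≠ 0 := Function.ne_iff.2 ⟨Classical.arbitrary ι, (hw_pos _).ne'⟩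
  have hint : IsIntegral ℚ lam := (A.isIntegral_of_vecMul_eq_smul ⟨w, hw0, hw⟩).tower_top
  set K := ℚ⟮lam⟯
  set pb := adjoin.powerBasis hint
  have hgen : (pb.gen : ℝ) = lam := by simp [pb]
  have hmap : (A.map (Int.cast : ℤ → K)).map (algebraMap K ℝ) = A.map (Int.cast : ℤ → ℝ) := by
    simp [Matrix.map_map, Function.comp_def]
  obtain ⟨u, hu0, hu⟩ := (A.map (Int.cast : ℤ → K)).exists_vecMul_eq_smul_of_map
    (algebraMap K ℝ) pb.gen ⟨w, hw0, by rwa [hmap, IntermediateField.algebraMap_apply, hgen]⟩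
  have hu_real : algebraMap K ℝ ∘ u ᵥ* A.map (Int.cast : ℤ → ℝ) = lam • (algebraMap K ℝ ∘ u) := by
    ext j
    rw [← hmap, ← RingHom.map_vecMul, hu]
    simp [hgen]
  have hpow : A.map (Int.cast : ℤ → ℝ) ^ N = (A ^ N).map Int.cast :=
    (map_pow (Int.castRingHom ℝ).mapMatrix A N).symm
  obtain ⟨c, hc⟩ := exists_eq_smul_of_vecMul_eq_smul_of_pos (B := A.map (Int.cast : ℤ → ℝ) ^ N)
    (fun i j => by simpa [hpow] using hN i j) hw_pos (vecMul_pow_of_vecMul_eq_smul hw N)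
    (vecMul_pow_of_vecMul_eq_smul hu_real N)
  have hc0 : c ≠ 0 := by
    rintro rfl
    exact hu0 (funext fun i => (algebraMap K ℝ).injective (by simpa using congrFun hc i))
  have hspan : span ℚ (range u) = ⊤ :=
    eq_top_of_mul_gen_mem pb (by simpa [Function.ne_iff] using hu0) fun s hs =>
      A.mul_mem_span_range_of_vecMul_eq_smul hu hs
  set ψ : K →ₗ[ℚ] ℝ := c⁻¹ • (Algebra.linearMap K ℝ).restrictScalars ℚ
  have hψu : ψ ∘ u = w := by
    ext i
    have hci : (u i : ℝ) = c * w i := congrFun hc i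
    simp [ψ, hci, hc0]
  have hψ : Function.Injective ψ := fun x y h =>
    (algebraMap K ℝ).injective (by simpa [ψ, hc0] using h)
  calc finrank ℚ (span ℚ (range w))
      = finrank ℚ (LinearMap.range ψ) := by
        rw [LinearMap.range_eq_map, ← hspan, map_span, ← range_comp, hψu]
    _ = finrank ℚ K := LinearMap.finrank_range_of_inj hψ
    _ = (minpoly ℚ lam).natDegree := adjoin.finrank hint

theorem stmt_14_general {k : ℕ} (A : Matrix (Fin k) (Fin k) ℤ)
    (hprim : ∃ N : ℕ, 0 < N ∧ ∀ i j, 0 < (A ^ N) i j)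
    (lam : ℝ)
    (n : ℕ) (hndeg : n = (minpoly ℚ lam).natDegree)
    (w : Fin k → ℝ) (hwpos : ∀ i, 0 < w i)
    (hw : w ᵥ* (A.map (Int.cast : ℤ → ℝ)) = lam • w)
    (L : Submodule ℤ (Fin k → ℤ))
    (hL : ∀ x : Fin k → ℤ, x ∈ L ↔ (∑ i, w i * (x i : ℝ)) = 0) :
    Module.Free ℤ L ∧ Module.finrank ℤ L = k - n := by
  obtain rfl : L = LinearMap.ker (Fintype.linearCombination ℤ w) := by
    ext x
    simp [hL, Fintype.linearCombination_apply, mul_comm]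
  refine ⟨inferInstance, ?_⟩
  rw [finrank_ker_linearCombination, Fintype.card_fin]
  obtain rfl | hk := Nat.eq_zero_or_pos k
  · simp -- `0 - n = 0` in `ℕ`
  · have := Fin.pos_iff_nonempty.1 hk
    obtain ⟨N, -, hN⟩ := hprim
    rw [A.finrank_span_range_eq_natDegree_minpoly hN hwpos hw, hndeg]

theorem stmt_14 {k : ℕ} (A : Matrix (Fin k) (Fin k) ℤ)
    (hprim : ∃ N : ℕ, 0 < N ∧ ∀ i j, 0 < (A ^ N) i j)
    (lam : ℝ)
    (heig : ∃ v : Fin k → ℝ, v ≠ 0 ∧ (A.map (Int.cast : ℤ → ℝ)) *ᵥ v = lam • v)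
    (hmax : ∀ μ : ℂ, μ ≠ (lam : ℂ) →
      (∃ u : Fin k → ℂ, u ≠ 0 ∧ (A.map (Int.cast : ℤ → ℂ)) *ᵥ u = μ • u) →
      ‖μ‖ < lam)
    (n : ℕ) (hndeg : n = (minpoly ℚ lam).natDegree)
    (w : Fin k → ℝ) (hwpos : ∀ i, 0 < w i)
    (hw : w ᵥ* (A.map (Int.cast : ℤ → ℝ)) = lam • w)
    (L : Submodule ℤ (Fin k → ℤ))
    (hL : ∀ x : Fin k → ℤ, x ∈ L ↔ (∑ i, w i * (x i : ℝ)) = 0) :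
    Module.Free ℤ L ∧ Module.finrank ℤ L = k - n :=
  stmt_14_general A hprim lam n hndeg w hwpos hw L hL
end
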